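/- Let A, Σ, P be real m×m matrices with Σ and P symmetric positive definite, and set S = Σ⁻¹ A and Λ = Σ⁻¹. If the block matrix [[P, Sᵀ], [S, 2Λ − P]] is positive definite, then Aᵀ P A − P is negative definite, i.e., the Lyapunov inequality Aᵀ P A ≺ P holds. -/

import Mathlib

/-!
Completing the square, `(Λ - P) P⁻¹ (Λ - P) ⪰ 0`, gives `2Λ - P ⪯ Λ P⁻¹ Λ`, so the block matrix
stays positive definite when its lower-right corner is enlarged to `Λ P⁻¹ Λ`. The Schur complement
of that corner is `P - Sᵀ (Λ P⁻¹ Λ)⁻¹ S = P - Sᵀ Σ P Σ S = P - Aᵀ P A`, hence positive definite.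
-/

open Matrix
open scoped MatrixOrder ComplexOrder

namespace Matrix

variable {𝕜 m n : Type*} [RCLike 𝕜] [Fintype m] [Fintype n]

theorem PosDef.fromBlocks_of_le₂₂ {A : Matrix m m 𝕜} {B : Matrix m n 𝕜} {C : Matrix n m 𝕜}
    {D E : Matrix n n 𝕜} (h : (fromBlocks A B C D).PosDef) (hDE : D ≤ E) :
    (fromBlocks A B C E).PosDef := by
  classical
  have hcorner : (fromBlocks 0 0 0 (E - D) : Matrix (m ⊕ n) (m ⊕ n) 𝕜).PosSemidef := by
    convert (le_iff.mp hDE).conjTranspose_mul_mul_same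
      (fromCols (0 : Matrix n m 𝕜) (1 : Matrix n n 𝕜))
    ext (i | i) (j | j) <;> simp [conjTranspose_fromCols_eq_fromRows_conjTranspose]
  simpa [fromBlocks_add] using h.add_posSemidef hcorner

theorem PosDef.sub_mul_inv_mul_conjTranspose [DecidableEq n] {A : Matrix m m 𝕜}
    {B : Matrix m n 𝕜} {D : Matrix n n 𝕜} (h : (fromBlocks A B Bᴴ D).PosDef) :
    (A - B * D⁻¹ * Bᴴ).PosDef := by
  have hD : D.PosDef := h.submatrix Sum.inr_injective
  have hA : A.IsHermitian := (isHermitian_fromBlocks_iff.mp h.1).1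
  have := hD.isUnit.invertible
  refine posDef_iff_dotProduct_mulVec.mpr
    ⟨hA.sub (isHermitian_mul_mul_conjTranspose B hD.inv.1), fun x hx => ?_⟩
  have hxy : x ⊕ᵥ -((D⁻¹ * Bᴴ) *ᵥ x) ≠ 0 := fun h0 => hx (funext fun i => congrFun h0 (.inl i))
  have hpos := h.dotProduct_mulVec_pos hxy
  rw [dotProduct_mulVec, schur_complement_eq₂₂ A B _ _ hD.1] at hpos
  simpa [dotProduct_mulVec] using hpos

theorem two_smul_sub_le_mul_inv_mul [DecidableEq n] {P Λ : Matrix n n 𝕜} (hP : P.PosDef)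
    (hΛ : Λ.IsHermitian) : 2 • Λ - P ≤ Λ * P⁻¹ * Λ := by
  have hP₁ : IsUnit P.det := hP.isUnit.map detMonoidHom
  have hsquare : Λ * P⁻¹ * Λ - (2 • Λ - P) = (Λ - P)ᴴ * P⁻¹ * (Λ - P) := by
    rw [conjTranspose_sub, hΛ.eq, hP.1.eq]
    simp only [Matrix.sub_mul, Matrix.mul_sub, Matrix.mul_nonsing_inv _ hP₁,
      Matrix.nonsing_inv_mul _ hP₁, Matrix.one_mul, Matrix.mul_one, Matrix.mul_assoc, two_smul]
    abel
  rw [le_iff, hsquare]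
  exact hP.inv.posSemidef.conjTranspose_mul_mul_same _

end Matrix

theorem stmt_2 {m : ℕ} (A Sig P : Matrix (Fin m) (Fin m) ℝ)
    (hSig : Sig.PosDef) (hP : P.PosDef)
    (S : Matrix (Fin m) (Fin m) ℝ) (hS : S = Sig⁻¹ * A)
    (Λ : Matrix (Fin m) (Fin m) ℝ) (hΛ : Λ = Sig⁻¹)
    (hblock : (Matrix.fromBlocks P Sᵀ S (2 • Λ - P)).PosDef) :
    (P - Aᵀ * P * A).PosDef := by
  subst hS hΛ
  have hSig₁ : IsUnit Sig.det := hSig.det_pos.ne'.isUnit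
  have hP₁ : IsUnit P.det := hP.det_pos.ne'.isUnit
  have hSigT : Sig⁻¹ᵀ = Sig⁻¹ := hSig.inv.1.eq
  have hrelaxed : (fromBlocks P (Sig⁻¹ * A)ᵀ (Sig⁻¹ * A)ᵀᴴ (Sig⁻¹ * P⁻¹ * Sig⁻¹)).PosDef := by
    simpa only [conjTranspose_eq_transpose_of_trivial, transpose_transpose] using
      hblock.fromBlocks_of_le₂₂ (two_smul_sub_le_mul_inv_mul hP hSig.inv.1)
  have hinv : (Sig⁻¹ * P⁻¹ * Sig⁻¹)⁻¹ = Sig * P * Sig := by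
    rw [Matrix.mul_inv_rev, Matrix.mul_inv_rev, nonsing_inv_nonsing_inv _ hSig₁,
      nonsing_inv_nonsing_inv _ hP₁, Matrix.mul_assoc]
  have hcongr : (Sig⁻¹ * A)ᵀ * (Sig⁻¹ * P⁻¹ * Sig⁻¹)⁻¹ * (Sig⁻¹ * A)ᵀᴴ = Aᵀ * P * A := by
    rw [hinv, conjTranspose_eq_transpose_of_trivial, transpose_transpose, transpose_mul, hSigT]
    simp only [Matrix.mul_assoc, nonsing_inv_mul_cancel_left _ _ hSig₁,
      mul_nonsing_inv_cancel_left _ _ hSig₁]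
  simpa only [hcongr] using hrelaxed.sub_mul_inv_mul_conjTranspose
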